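/- Let Ω ⊂ ℝ² be bounded open, u ∈ C²(cl(Ω)), M := sup_Ω |u|, Q = √(1+|∇u|²), H = div(∇u/Q). Assume u = φ on ∂Ω. Then ∫_Ω Q dx ≤ |Ω| + ∫_{∂Ω}|φ| ds + |Ω|^{1/2} M (∫_Ω H² Q dx)^{1/2}. -/

import Mathlib

/-!
Apply the divergence theorem to the field `u ∇u / Q`. Its divergence is
`u H + |∇u|² / Q = u H + Q - 1 / Q`, so
`∫_Ω Q = ∫_{∂Ω} φ (∂u/∂ν) / Q - ∫_Ω u H + ∫_Ω 1 / Q`.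
Since `Q ≥ 1` and `|∂u/∂ν| ≤ |∇u| ≤ Q`, the last term is at most `|Ω|` and the boundary term at
most `∫_{∂Ω} |φ|`, while Cauchy–Schwarz together with `H² ≤ H² Q` bounds `|∫_Ω u H|` by
`M |Ω|^{1/2} (∫_Ω H² Q)^{1/2}`.
-/

open MeasureTheory

theorem one_le_sqrt_one_add {x : ℝ} (hx : 0 ≤ x) : 1 ≤ √(1 + x) :=
  Real.one_le_sqrt.2 (by linarith)

theorem div_sqrt_one_add_eq_sub {x : ℝ} (hx : 0 ≤ x) :
    x / √(1 + x) = √(1 + x) - 1 / √(1 + x) := by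
  have hs : 0 < √(1 + x) := by positivity
  field_simp
  rw [Real.sq_sqrt (by linarith)]
  ring

theorem abs_mul_add_mul_le_sqrt_one_add {a b c d : ℝ} (hcd : c ^ 2 + d ^ 2 = 1) :
    |a * c + b * d| ≤ √(1 + (a ^ 2 + b ^ 2)) :=
  Real.abs_le_sqrt (by nlinarith [sq_nonneg (a * d - b * c)])

theorem abs_mul_div_sqrt_one_add_dot_le (t : ℝ) {a b c d : ℝ} (hcd : c ^ 2 + d ^ 2 = 1) :
    |t * (a / √(1 + (a ^ 2 + b ^ 2))) * c + t * (b / √(1 + (a ^ 2 + b ^ 2))) * d| ≤ |t| := by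
  have hs : 0 < √(1 + (a ^ 2 + b ^ 2)) := by positivity
  rw [show t * (a / √(1 + (a ^ 2 + b ^ 2))) * c + t * (b / √(1 + (a ^ 2 + b ^ 2))) * d
      = t * ((a * c + b * d) / √(1 + (a ^ 2 + b ^ 2))) by ring, abs_mul, abs_div, abs_of_pos hs]
  exact mul_le_of_le_one_right (abs_nonneg t)
    ((div_le_one hs).2 (abs_mul_add_mul_le_sqrt_one_add hcd))

theorem sum_fderiv_mul_apply {𝕜 E ι : Type*} [NontriviallyNormedField 𝕜] [NormedAddCommGroup E]
    [NormedSpace 𝕜 E] [Fintype ι] {u : E → 𝕜} {F : E → ι → 𝕜} {y : E} (v : ι → E)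
    (hu : DifferentiableAt 𝕜 u y) (hF : ∀ i, DifferentiableAt 𝕜 (fun z => F z i) y) :
    ∑ i, fderiv 𝕜 (fun z => u z * F z i) y (v i) =
      u y * ∑ i, fderiv 𝕜 (fun z => F z i) y (v i) + ∑ i, F y i * fderiv 𝕜 u y (v i) := by
  simp only [Finset.mul_sum, ← Finset.sum_add_distrib]
  refine Finset.sum_congr rfl fun i _ => ?_
  rw [show (fun z => u z * F z i) = u * fun z => F z i from rfl, fderiv_mul hu (hF i)]
  simp only [add_apply, smul_apply, smul_eq_mul]

theorem sum_fderiv_mul_gradient_div_eq {E : Type*} [NormedAddCommGroup E] [NormedSpace ℝ E]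
    {u Q : E → ℝ} {p : E → Fin 2 → ℝ} {y : E} (v : Fin 2 → E) (hu : DifferentiableAt ℝ u y)
    (hpQ : ∀ i, DifferentiableAt ℝ (fun z => p z i / Q z) y)
    (hp : ∀ i, p y i = fderiv ℝ u y (v i)) (hQ : Q y = √(1 + (p y 0 ^ 2 + p y 1 ^ 2))) :
    ∑ i, fderiv ℝ (fun z => u z * (p z i / Q z)) y (v i) =
      u y * ∑ i, fderiv ℝ (fun z => p z i / Q z) y (v i) + Q y - 1 / Q y := by
  rw [sum_fderiv_mul_apply v hu hpQ]
  simp only [← hp, Fin.sum_univ_two]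
  rw [hQ, add_sub_assoc, ← div_sqrt_one_add_eq_sub (by positivity)]
  ring

section Regularity

variable {E : Type*} [NormedAddCommGroup E] [NormedSpace ℝ E] {U : Set E} {u Q H : E → ℝ}
  {p : E → Fin 2 → ℝ} {v : Fin 2 → E}

theorem contDiffOn_gradient (hu : ContDiffOn ℝ 2 u U) (hU : IsOpen U)
    (hp : ∀ y i, p y i = fderiv ℝ u y (v i)) (i : Fin 2) : ContDiffOn ℝ 1 (fun y => p y i) U :=
  ((hu.fderiv_of_isOpen hU le_rfl).clm_apply contDiffOn_const).congr fun y _ => hp y i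

theorem contDiffOn_sqrt_one_add_gradient (hu : ContDiffOn ℝ 2 u U) (hU : IsOpen U)
    (hp : ∀ y i, p y i = fderiv ℝ u y (v i)) (hQ : ∀ y, Q y = √(1 + (p y 0 ^ 2 + p y 1 ^ 2))) :
    ContDiffOn ℝ 1 Q U :=
  ((contDiffOn_const.add (((contDiffOn_gradient hu hU hp 0).pow 2).add
    ((contDiffOn_gradient hu hU hp 1).pow 2))).sqrt fun y _ => by positivity).congr
      fun y _ => hQ y

theorem contDiffOn_gradient_div_sqrt (hu : ContDiffOn ℝ 2 u U) (hU : IsOpen U)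
    (hp : ∀ y i, p y i = fderiv ℝ u y (v i)) (hQ : ∀ y, Q y = √(1 + (p y 0 ^ 2 + p y 1 ^ 2)))
    (i : Fin 2) : ContDiffOn ℝ 1 (fun y => p y i / Q y) U :=
  (contDiffOn_gradient hu hU hp i).div (contDiffOn_sqrt_one_add_gradient hu hU hp hQ)
    fun y _ => hQ y ▸ (Real.sqrt_pos.2 (by positivity)).ne'

theorem continuousOn_meanCurvature (hu : ContDiffOn ℝ 2 u U) (hU : IsOpen U)
    (hp : ∀ y i, p y i = fderiv ℝ u y (v i)) (hQ : ∀ y, Q y = √(1 + (p y 0 ^ 2 + p y 1 ^ 2)))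
    (hH : ∀ y, H y = ∑ i, fderiv ℝ (fun z => p z i / Q z) y (v i)) : ContinuousOn H U :=
  (continuousOn_finsetSum _ fun i _ =>
    ((contDiffOn_gradient_div_sqrt hu hU hp hQ i).continuousOn_fderiv_of_isOpen hU
      le_rfl).clm_apply continuousOn_const).congr fun y _ => hH y

end Regularity

theorem ContinuousOn.integrableOn_of_isBounded {X E : Type*} [MetricSpace X] [ProperSpace X]
    [MeasurableSpace X] [OpensMeasurableSpace X] [NormedAddCommGroup E] {μ : Measure X}
    [IsFiniteMeasureOnCompacts μ] {f : X → E} {s U : Set X} (hf : ContinuousOn f U)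
    (hs : Bornology.IsBounded s) (hsU : closure s ⊆ U) : IntegrableOn f s μ :=
  ((hf.mono hsU).integrableOn_compact hs.isCompact_closure).mono_set subset_closure

theorem setIntegral_sum_fderiv_mul_gradient_div {E : Type*} [NormedAddCommGroup E]
    [NormedSpace ℝ E] [MeasurableSpace E] {μ : Measure E} {Ω U : Set E} {u Q H : E → ℝ}
    {p : E → Fin 2 → ℝ} {v : Fin 2 → E} (hΩ : MeasurableSet Ω) (hU : IsOpen U) (hΩU : Ω ⊆ U)
    (hu : DifferentiableOn ℝ u U) (hpQ : ∀ i, DifferentiableOn ℝ (fun y => p y i / Q y) U)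
    (hp : ∀ y i, p y i = fderiv ℝ u y (v i)) (hQ : ∀ y, Q y = √(1 + (p y 0 ^ 2 + p y 1 ^ 2)))
    (hH : ∀ y, H y = ∑ i, fderiv ℝ (fun z => p z i / Q z) y (v i))
    (huH : IntegrableOn (fun y => u y * H y) Ω μ) (hQi : IntegrableOn Q Ω μ)
    (hinvQ : IntegrableOn (fun y => 1 / Q y) Ω μ) :
    ∫ y in Ω, ∑ i, fderiv ℝ (fun z => u z * (p z i / Q z)) y (v i) ∂μ =
      (∫ y in Ω, u y * H y ∂μ) + (∫ y in Ω, Q y ∂μ) - ∫ y in Ω, 1 / Q y ∂μ := by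
  have hdiv : ∀ y ∈ Ω, ∑ i, fderiv ℝ (fun z => u z * (p z i / Q z)) y (v i) =
      u y * H y + Q y - 1 / Q y := fun y hy => by
    have hyU : U ∈ nhds y := hU.mem_nhds (hΩU hy)
    rw [hH y]
    exact sum_fderiv_mul_gradient_div_eq v (hu.differentiableAt hyU)
      (fun i => (hpQ i).differentiableAt hyU) (hp y) (hQ y)
  rw [setIntegral_congr_fun hΩ hdiv, integral_sub (f := fun y => u y * H y + Q y)
    (huH.add hQi) hinvQ, integral_add huH hQi]

section Integrals

variable {α : Type*} [MeasurableSpace α] {μ : Measure α}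

theorem setIntegral_le_of_abs_le {s : Set α} {f g : α → ℝ} (hs : MeasurableSet s)
    (hg : IntegrableOn g s μ) (hfg : ∀ x ∈ s, |f x| ≤ g x) :
    ∫ x in s, f x ∂μ ≤ ∫ x in s, g x ∂μ :=
  (le_abs_self _).trans <|
    norm_integral_le_of_norm_le (f := f) hg <| ae_restrict_of_forall_mem hs hfg

theorem setIntegral_one_div_le_measureReal {s : Set α} {f : α → ℝ} (hs : MeasurableSet s)
    (hμs : μ s ≠ ⊤) (hf : ∀ x ∈ s, 1 ≤ f x) : ∫ x in s, 1 / f x ∂μ ≤ μ.real s := by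
  refine (setIntegral_le_of_abs_le (g := fun _ => 1) hs (integrableOn_const hμs)
    fun x hx => ?_).trans_eq (by simp)
  have hfx : 0 < f x := zero_lt_one.trans_le (hf x hx)
  rw [abs_of_pos (one_div_pos.2 hfx)]
  exact (div_le_one hfx).2 (hf x hx)

variable {g w : α → ℝ}

theorem memLp_two_of_sq_le (hg : AEStronglyMeasurable g μ) (hw : Integrable w μ)
    (hgw : ∀ᵐ x ∂μ, g x ^ 2 ≤ w x) : MemLp g 2 μ :=
  (memLp_two_iff_integrable_sq hg).2 <| hw.mono' (hg.pow 2) <| by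
    filter_upwards [hgw] with x hx
    rwa [Real.norm_of_nonneg (sq_nonneg _)]

theorem integral_abs_le_of_sq_le [IsFiniteMeasure μ] (hg : AEStronglyMeasurable g μ)
    (hw : Integrable w μ) (hgw : ∀ᵐ x ∂μ, g x ^ 2 ≤ w x) :
    ∫ x, |g x| ∂μ ≤ μ.real Set.univ ^ (1 / 2 : ℝ) * (∫ x, w x ∂μ) ^ (1 / 2 : ℝ) := by
  have hL2 : MemLp (fun x => |g x|) (ENNReal.ofReal 2) μ := by
    rw [ENNReal.ofReal_ofNat]
    exact (memLp_two_of_sq_le hg hw hgw).abs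
  have holder := integral_mul_le_Lp_mul_Lq_of_nonneg Real.HolderConjugate.two_two
    (ae_of_all _ fun _ => zero_le_one) (ae_of_all _ fun x => abs_nonneg (g x))
    (by simpa using memLp_const (1 : ℝ)) hL2
  have hsq : ∫ x, |g x| ^ (2 : ℝ) ∂μ ≤ ∫ x, w x ∂μ := by
    refine integral_mono_of_nonneg (ae_of_all _ fun x => by positivity) hw ?_
    filter_upwards [hgw] with x hx
    rwa [Real.rpow_two, sq_abs]
  calc ∫ x, |g x| ∂μ = ∫ x, 1 * |g x| ∂μ := by simp
    _ ≤ _ := holder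
    _ ≤ _ := by
      simp only [Real.one_rpow, integral_const, smul_eq_mul, mul_one]
      gcongr

theorem abs_integral_mul_le_of_abs_le_of_sq_le [IsFiniteMeasure μ] {f : α → ℝ} {M : ℝ}
    (hfM : ∀ᵐ x ∂μ, |f x| ≤ M) (hg : AEStronglyMeasurable g μ) (hw : Integrable w μ)
    (hgw : ∀ᵐ x ∂μ, g x ^ 2 ≤ w x) :
    |∫ x, f x * g x ∂μ| ≤ μ.real Set.univ ^ (1 / 2 : ℝ) * M * (∫ x, w x ∂μ) ^ (1 / 2 : ℝ) := by
  rcases eq_zero_or_neZero μ with rfl | hμ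
  · simp
  have hM : 0 ≤ M := by
    obtain ⟨x, hx⟩ := hfM.exists
    exact (abs_nonneg _).trans hx
  have hgi : Integrable g μ := (memLp_two_of_sq_le hg hw hgw).integrable one_le_two
  calc |∫ x, f x * g x ∂μ| ≤ ∫ x, M * |g x| ∂μ := by
        refine abs_integral_le_integral_abs.trans <|
          integral_mono_of_nonneg (ae_of_all _ fun x => abs_nonneg _) (hgi.abs.const_mul M) ?_
        filter_upwards [hfM] with x hx
        rw [abs_mul]
        exact mul_le_mul_of_nonneg_right hx (abs_nonneg _)
    _ = M * ∫ x, |g x| ∂μ := integral_const_mul M _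
    _ ≤ M * (μ.real Set.univ ^ (1 / 2 : ℝ) * (∫ x, w x ∂μ) ^ (1 / 2 : ℝ)) :=
        mul_le_mul_of_nonneg_left (integral_abs_le_of_sq_le hg hw hgw) hM
    _ = _ := by ring

end Integrals

/-- Area bound for graphs: for `Ω ⊂ ℝ²` bounded open with C² boundary (encoded via a
finite surface measure `σ` on `∂Ω`, a unit outer normal `ν` and the divergence
theorem), `u ∈ C²(cl(Ω))` with `u = φ` on `∂Ω`, `M ≥ sup_Ω |u|`, `Q = √(1+|∇u|²)`
and `H = div(∇u/Q)`:
`∫_Ω Q dx ≤ |Ω| + ∫_{∂Ω}|φ| dσ + |Ω|^{1/2} M (∫_Ω H² Q dx)^{1/2}`. -/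
theorem stmt18 (Ω U : Set (EuclideanSpace ℝ (Fin 2)))
    (hΩo : IsOpen Ω) (hΩb : Bornology.IsBounded Ω)
    (hUo : IsOpen U) (hΩU : closure Ω ⊆ U)
    (u : EuclideanSpace ℝ (Fin 2) → ℝ) (hu : ContDiffOn ℝ 2 u U)
    (p : EuclideanSpace ℝ (Fin 2) → Fin 2 → ℝ)
    (hp : ∀ y i, p y i = fderiv ℝ u y (EuclideanSpace.single i 1))
    (Q : EuclideanSpace ℝ (Fin 2) → ℝ)
    (hQ : ∀ y, Q y = Real.sqrt (1 + ((p y 0) ^ 2 + (p y 1) ^ 2)))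
    (H : EuclideanSpace ℝ (Fin 2) → ℝ)
    (hH : ∀ y, H y = ∑ i, fderiv ℝ (fun z => p z i / Q z) y (EuclideanSpace.single i 1))
    (ν : EuclideanSpace ℝ (Fin 2) → Fin 2 → ℝ)
    (hν : ∀ y ∈ frontier Ω, (ν y 0) ^ 2 + (ν y 1) ^ 2 = 1)
    (σ : Measure (EuclideanSpace ℝ (Fin 2))) [IsFiniteMeasure σ]
    (hdiv : ∀ F : EuclideanSpace ℝ (Fin 2) → Fin 2 → ℝ,
      (∀ i, ContDiffOn ℝ 1 (fun y => F y i) U) →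
      (∫ y in Ω, ∑ i, fderiv ℝ (fun z => F z i) y (EuclideanSpace.single i 1)) =
        ∫ y in frontier Ω, ∑ i, F y i * ν y i ∂σ)
    (φ : EuclideanSpace ℝ (Fin 2) → ℝ) (hφ : Continuous φ)
    (hbc : ∀ y ∈ frontier Ω, u y = φ y)
    (M : ℝ) (hM : ∀ y ∈ Ω, |u y| ≤ M) :
    ∫ y in Ω, Q y ≤
      (volume Ω).toReal + (∫ y in frontier Ω, |φ y| ∂σ) +
        (volume Ω).toReal ^ ((1 : ℝ) / 2) * M *
          (∫ y in Ω, (H y) ^ 2 * Q y) ^ ((1 : ℝ) / 2) := by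
  have hQ1 := contDiffOn_sqrt_one_add_gradient hu hUo hp hQ
  have hpQ1 := contDiffOn_gradient_div_sqrt hu hUo hp hQ
  have hHc := continuousOn_meanCurvature hu hUo hp hQ hH
  have hQ_ge : ∀ y, 1 ≤ Q y := fun y => hQ y ▸ one_le_sqrt_one_add (by positivity)
  have hintegrable : ∀ f : EuclideanSpace ℝ (Fin 2) → ℝ, ContinuousOn f U → IntegrableOn f Ω :=
    fun f hf => hf.integrableOn_of_isBounded hΩb hΩU
  have huHi : IntegrableOn (fun y => u y * H y) Ω := hintegrable _ (hu.continuousOn.mul hHc)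
  have hQi : IntegrableOn Q Ω := hintegrable Q hQ1.continuousOn
  have hinvQi : IntegrableOn (fun y => 1 / Q y) Ω :=
    hintegrable _ <| continuousOn_const.div hQ1.continuousOn fun y _ =>
      (one_pos.trans_le (hQ_ge y)).ne'
  have hgreen := hdiv (fun y i => u y * (p y i / Q y)) fun i => (hu.of_le one_le_two).mul (hpQ1 i)
  rw [setIntegral_sum_fderiv_mul_gradient_div hΩo.measurableSet hUo (subset_closure.trans hΩU)
    (hu.differentiableOn two_ne_zero) (fun i => (hpQ1 i).differentiableOn one_ne_zero) hp hQ hH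
    huHi hQi hinvQi] at hgreen
  have hflux : ∫ y in frontier Ω, ∑ i, u y * (p y i / Q y) * ν y i ∂σ ≤
      ∫ y in frontier Ω, |φ y| ∂σ := setIntegral_le_of_abs_le isClosed_frontier.measurableSet
    (hφ.abs.continuousOn.integrableOn_compact (μ := σ) (hΩb.isCompact_closure.of_isClosed_subset
      isClosed_frontier frontier_subset_closure)) fun y hy => by
    rw [Fin.sum_univ_two, ← hbc y hy, hQ y]
    exact abs_mul_div_sqrt_one_add_dot_le _ (hν y hy)
  have hinvQ : ∫ y in Ω, 1 / Q y ≤ volume.real Ω :=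
    setIntegral_one_div_le_measureReal hΩo.measurableSet hΩb.measure_lt_top.ne fun y _ => hQ_ge y
  have : IsFiniteMeasure (volume.restrict Ω) := isFiniteMeasure_restrict.2 hΩb.measure_lt_top.ne
  have hCS := abs_integral_mul_le_of_abs_le_of_sq_le (w := fun y => H y ^ 2 * Q y)
    (ae_restrict_of_forall_mem hΩo.measurableSet hM)
    ((hHc.mono (subset_closure.trans hΩU)).aestronglyMeasurable hΩo.measurableSet)
    (hintegrable _ ((hHc.pow 2).mul hQ1.continuousOn))
    (ae_of_all _ fun y => le_mul_of_one_le_right (sq_nonneg (H y)) (hQ_ge y))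
  rw [measureReal_restrict_apply_univ] at hCS
  rw [measureReal_def] at hCS hinvQ
  linarith [neg_abs_le (∫ y in Ω, u y * H y)]
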